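/- For all z ∈ ℝ and all x ∈ ℝ, the Stein solution derivative satisfies |f_z'(x)| ≤ 1, where f_z solves f'(x) - x f(x) = 1_{x ≤ z} - Φ(z). -/

import Mathlib

open MeasureTheory Real

noncomputable def stdPhi (x : ℝ) : ℝ :=
  (Real.sqrt (2 * Real.pi))⁻¹ * ∫ u in Set.Iic x, Real.exp (-u ^ 2 / 2)

noncomputable def steinF (z x : ℝ) : ℝ :=
  if x ≤ z then Real.sqrt (2 * Real.pi) * Real.exp (x ^ 2 / 2) * stdPhi x * (1 - stdPhi z)
  else Real.sqrt (2 * Real.pi) * Real.exp (x ^ 2 / 2) * (1 - stdPhi x) * stdPhi z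

/-! The derivative of `f_z` is `(1 + x R(-x)) (1 - Φ(z))` for `x ≤ z` and `-(1 - x R(x)) Φ(z)` for
`x > z`, where `R(x) = (1 - Φ(x)) / φ(x)` is the Mills ratio. The Gaussian tail bound
`x R(x) ≤ 1` makes both factors `1 ± x R(±x)` nonnegative, so in each case the derivative has a
definite sign and only one side of `|f_z'(x)| ≤ 1` needs work. Monotonicity of `Φ` reduces that
side to `z = x`, where both cases become `(1 + x R(-x)) (1 - Φ(x)) = 1 - Φ(x) + x R(x) Φ(x) ≤ 1`. -/

open Set Filter Topology

lemma integrable_exp_neg_sq_div_two : Integrable fun u : ℝ => exp (-u ^ 2 / 2) := by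
  convert integrable_exp_neg_mul_sq (b := 1 / 2) (by norm_num) using 2 with u
  ring_nf

lemma integral_exp_neg_sq_div_two : ∫ u : ℝ, exp (-u ^ 2 / 2) = √(2 * π) := by
  convert integral_gaussian (1 / 2) using 2 with u
  · ring_nf
  · field_simp

lemma hasDerivAt_neg_exp_neg_sq_div_two (u : ℝ) :
    HasDerivAt (fun u : ℝ => -exp (-u ^ 2 / 2)) (u * exp (-u ^ 2 / 2)) u := by
  have hinner : HasDerivAt (fun u : ℝ => -u ^ 2 / 2) (-u) u :=
    ((hasDerivAt_pow 2 u).neg.div_const 2).congr_deriv (by push_cast; ring)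
  exact hinner.exp.neg.congr_deriv (by ring)

lemma tendsto_neg_exp_neg_sq_div_two_atTop :
    Tendsto (fun u : ℝ => -exp (-u ^ 2 / 2)) atTop (𝓝 0) := by
  rw [← neg_zero]
  refine (tendsto_exp_atBot.comp ?_).neg
  simp_rw [neg_div]
  exact tendsto_neg_atTop_atBot.comp
    ((tendsto_pow_atTop two_ne_zero).atTop_div_const two_pos)

lemma integral_Ioi_exp_neg_sq_div_two_le {x : ℝ} (hx : 0 < x) :
    ∫ u in Ioi x, exp (-u ^ 2 / 2) ≤ exp (-x ^ 2 / 2) / x := by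
  have hderiv : ∀ u ∈ Ici x, HasDerivAt (fun u : ℝ => -exp (-u ^ 2 / 2)) (u * exp (-u ^ 2 / 2)) u :=
    fun u _ => hasDerivAt_neg_exp_neg_sq_div_two u
  have hnonneg : ∀ u ∈ Ioi x, 0 ≤ u * exp (-u ^ 2 / 2) :=
    fun u hu => mul_nonneg (hx.trans hu).le (exp_pos _).le
  have hint := integrableOn_Ioi_deriv_of_nonneg' hderiv hnonneg
    tendsto_neg_exp_neg_sq_div_two_atTop
  have hval := integral_Ioi_of_hasDerivAt_of_nonneg' hderiv hnonneg
    tendsto_neg_exp_neg_sq_div_two_atTop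
  calc ∫ u in Ioi x, exp (-u ^ 2 / 2)
      ≤ ∫ u in Ioi x, u * exp (-u ^ 2 / 2) / x := by
        refine setIntegral_mono_on integrable_exp_neg_sq_div_two.integrableOn
          (hint.div_const x) measurableSet_Ioi fun u hu => ?_
        rw [le_div_iff₀ hx, mul_comm]
        exact mul_le_mul_of_nonneg_right (mem_Ioi.mp hu).le (exp_pos _).le
    _ = exp (-x ^ 2 / 2) / x := by rw [integral_div, hval, zero_sub, neg_neg]

lemma sqrt_two_pi_pos : 0 < √(2 * π) := by positivity

lemma sqrt_two_pi_mul_stdPhi (x : ℝ) :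
    √(2 * π) * stdPhi x = ∫ u in Iic x, exp (-u ^ 2 / 2) := by
  rw [stdPhi, mul_inv_cancel_left₀ sqrt_two_pi_pos.ne']

lemma sqrt_two_pi_mul_one_sub_stdPhi (x : ℝ) :
    √(2 * π) * (1 - stdPhi x) = ∫ u in Ioi x, exp (-u ^ 2 / 2) := by
  have hsplit := intervalIntegral.integral_Iic_add_Ioi (b := x)
    integrable_exp_neg_sq_div_two.integrableOn integrable_exp_neg_sq_div_two.integrableOn
  rw [integral_exp_neg_sq_div_two, ← sqrt_two_pi_mul_stdPhi] at hsplit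
  linarith

lemma stdPhi_neg (x : ℝ) : stdPhi (-x) = 1 - stdPhi x := by
  refine mul_left_cancel₀ sqrt_two_pi_pos.ne' ?_
  rw [sqrt_two_pi_mul_stdPhi, sqrt_two_pi_mul_one_sub_stdPhi, ← integral_comp_neg_Ioi]
  simp only [neg_sq]

lemma stdPhi_nonneg (x : ℝ) : 0 ≤ stdPhi x :=
  mul_nonneg (inv_nonneg.mpr (sqrt_nonneg _))
    (setIntegral_nonneg measurableSet_Iic fun _ _ => (exp_pos _).le)

lemma stdPhi_le_one (x : ℝ) : stdPhi x ≤ 1 := by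
  simpa [stdPhi_neg] using stdPhi_nonneg (-x)

lemma stdPhi_mono : Monotone stdPhi := fun _ _ hxy =>
  mul_le_mul_of_nonneg_left
    (setIntegral_mono_set integrable_exp_neg_sq_div_two.integrableOn
      (Eventually.of_forall fun _ => (exp_pos _).le) (Iic_subset_Iic.2 hxy).eventuallyLE)
    (inv_nonneg.mpr (sqrt_nonneg _))

/-- The Mills ratio `(1 - Φ(x)) / φ(x)` of the standard normal distribution. -/
noncomputable def millsRatio (x : ℝ) : ℝ := √(2 * π) * exp (x ^ 2 / 2) * (1 - stdPhi x)

lemma millsRatio_nonneg (x : ℝ) : 0 ≤ millsRatio x :=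
  mul_nonneg (by positivity) (sub_nonneg.mpr (stdPhi_le_one x))

lemma mul_millsRatio_le_one (x : ℝ) : x * millsRatio x ≤ 1 := by
  rcases le_or_gt x 0 with hx | hx
  · exact (mul_nonpos_of_nonpos_of_nonneg hx (millsRatio_nonneg x)).trans zero_le_one
  calc x * millsRatio x = x * exp (x ^ 2 / 2) * ∫ u in Ioi x, exp (-u ^ 2 / 2) := by
        rw [← sqrt_two_pi_mul_one_sub_stdPhi, millsRatio]; ring
    _ ≤ x * exp (x ^ 2 / 2) * (exp (-x ^ 2 / 2) / x) :=
        mul_le_mul_of_nonneg_left (integral_Ioi_exp_neg_sq_div_two_le hx) (by positivity)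
    _ = 1 := by field_simp; rw [← exp_add, add_neg_cancel, exp_zero]

lemma millsRatio_neg (x : ℝ) : millsRatio (-x) = √(2 * π) * exp (x ^ 2 / 2) * stdPhi x := by
  rw [millsRatio, stdPhi_neg, sub_sub_cancel, neg_sq]

lemma steinF_of_le {z x : ℝ} (h : x ≤ z) : steinF z x = millsRatio (-x) * (1 - stdPhi z) := by
  rw [steinF, if_pos h, millsRatio_neg]

lemma steinF_of_lt {z x : ℝ} (h : z < x) : steinF z x = millsRatio x * stdPhi z := by
  rw [steinF, if_neg h.not_ge, millsRatio]

lemma one_add_mul_millsRatio_neg_mul_one_sub_stdPhi_le_one (x : ℝ) :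
    (1 + x * millsRatio (-x)) * (1 - stdPhi x) ≤ 1 := by
  have hsymm : millsRatio (-x) * (1 - stdPhi x) = millsRatio x * stdPhi x := by
    rw [millsRatio_neg, millsRatio]; ring
  calc (1 + x * millsRatio (-x)) * (1 - stdPhi x)
      = 1 - stdPhi x + x * millsRatio x * stdPhi x := by rw [add_mul, mul_assoc, hsymm]; ring
    _ ≤ 1 - stdPhi x + 1 * stdPhi x :=
        add_le_add_right (mul_le_mul_of_nonneg_right (mul_millsRatio_le_one x) (stdPhi_nonneg x)) _
    _ = 1 := by ring

theorem steinF_deriv_global_bound (z x : ℝ) :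
    |x * steinF z x + (if x ≤ z then (1 : ℝ) else 0) - stdPhi z| ≤ 1 := by
  rw [abs_le]
  rcases le_or_gt x z with hxz | hzx
  · have hfactor : 0 ≤ 1 + x * millsRatio (-x) := by
      linarith [mul_millsRatio_le_one (-x), neg_mul x (millsRatio (-x))]
    have hPhi : 1 - stdPhi z ≤ 1 - stdPhi x := by linarith [stdPhi_mono hxz]
    rw [steinF_of_le hxz, if_pos hxz]
    have hbound := (mul_le_mul_of_nonneg_left hPhi hfactor).trans
      (one_add_mul_millsRatio_neg_mul_one_sub_stdPhi_le_one x)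
    constructor <;> linarith [mul_nonneg hfactor (sub_nonneg.mpr (stdPhi_le_one z))]
  · have hfactor : 0 ≤ 1 - x * millsRatio x := sub_nonneg.mpr (mul_millsRatio_le_one x)
    rw [steinF_of_lt hzx, if_neg hzx.not_ge]
    have hreflect := one_add_mul_millsRatio_neg_mul_one_sub_stdPhi_le_one (-x)
    rw [neg_neg, stdPhi_neg, sub_sub_cancel, neg_mul, ← sub_eq_add_neg] at hreflect
    have hbound := (mul_le_mul_of_nonneg_left (stdPhi_mono hzx.le) hfactor).trans hreflect
    constructor <;> linarith [mul_nonneg hfactor (stdPhi_nonneg z)]
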